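/- Let v = (v₁,v₂,v₃) : (0, π/2) → ℝ³ be twice continuously differentiable with ‖v(θ)‖ = 1 for all θ, and suppose that v satisfies, for all θ ∈ (0, π/2), the system −(d/dθ)(sin θ · v′(θ)) + (1/sin θ)·(4v₁(θ), 0, v₃(θ)) = (‖v′(θ)‖²·sin θ + (4v₁(θ)² + v₃(θ)²)/sin θ)·v(θ). Then the function θ ↦ ‖v′(θ)‖²·sin²θ − (4v₁(θ)² + v₃(θ)²) is constant on (0, π/2). -/

import Mathlib

open Set Real

/-- The point of `ℝ³` (with the Euclidean norm) with coordinates `(a, b, c)`. -/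
noncomputable def vec3 (a b c : ℝ) : EuclideanSpace ℝ (Fin 3) := WithLp.toLp 2 ![a, b, c]

/-- For a unit-vector solution `v` of the tangent-map ODE system on `(0, π/2)`,
the quantity `‖v′‖² sin²θ − (4v₁² + v₃²)` is constant. -/
theorem stmt10 (v : ℝ → EuclideanSpace ℝ (Fin 3))
    (hreg : ContDiffOn ℝ 2 v (Ioo 0 (π / 2)))
    (hunit : ∀ θ ∈ Ioo 0 (π / 2), ‖v θ‖ = 1)
    (hode : ∀ θ ∈ Ioo 0 (π / 2),
      -(deriv (fun t => Real.sin t • deriv v t) θ) +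
          (Real.sin θ)⁻¹ • vec3 (4 * v θ 0) 0 (v θ 2) =
        (‖deriv v θ‖ ^ 2 * Real.sin θ +
            (4 * (v θ 0) ^ 2 + (v θ 2) ^ 2) / Real.sin θ) • v θ) :
    ∃ Ce : ℝ, ∀ θ ∈ Ioo 0 (π / 2),
      ‖deriv v θ‖ ^ 2 * (Real.sin θ) ^ 2 - (4 * (v θ 0) ^ 2 + (v θ 2) ^ 2) = Ce := by
  have hopen : IsOpen (Ioo 0 (π / 2)) := isOpen_Ioo
  set s : Set ℝ := Ioo 0 (π / 2) with hs
  set f : ℝ → ℝ := fun θ =>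
    ‖deriv v θ‖ ^ 2 * (Real.sin θ) ^ 2 - (4 * (v θ 0) ^ 2 + (v θ 2) ^ 2) with hfdef
  have key : ∀ θ ∈ s, HasDerivAt f 0 θ := by
    intro θ hθ
    have hnθ : s ∈ nhds θ := hopen.mem_nhds hθ
    have hsin : Real.sin θ ≠ 0 :=
      ne_of_gt (Real.sin_pos_of_pos_of_lt_pi hθ.1 (hθ.2.trans (by linarith [pi_pos])))
    have hd1 : DifferentiableOn ℝ v s := hreg.differentiableOn (by norm_num)
    have hv : HasDerivAt v (deriv v θ) θ := ((hd1 θ hθ).differentiableAt hnθ).hasDerivAt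
    have hd2 : DifferentiableOn ℝ (deriv v) s :=
      (hreg.deriv_of_isOpen hopen (by norm_num : (1 : WithTop ℕ∞) + 1 ≤ 2)).differentiableOn one_ne_zero
    have hv' : HasDerivAt (deriv v) (deriv (deriv v) θ) θ :=
      ((hd2 θ hθ).differentiableAt hnθ).hasDerivAt
    set V := deriv v θ with hV
    set A := deriv (deriv v) θ with hA
    -- orthogonality
    have horth : (inner ℝ (v θ) V : ℝ) = 0 := by
      have hone : (fun t => (inner ℝ (v t) (v t) : ℝ)) =ᶠ[nhds θ] fun _ => 1 := by
        filter_upwards [hnθ] with t ht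
        rw [real_inner_self_eq_norm_sq, hunit t ht, one_pow]
      have h1 : HasDerivAt (fun t => (inner ℝ (v t) (v t) : ℝ))
          (inner ℝ (v θ) V + inner ℝ V (v θ)) θ := hv.inner ℝ hv
      have h2 : HasDerivAt (fun t => (inner ℝ (v t) (v t) : ℝ)) 0 θ :=
        (hasDerivAt_const θ (1 : ℝ)).congr_of_eventuallyEq hone
      have h3 := h1.unique h2
      have h4 := real_inner_comm (v θ) V
      linarith
    -- derivative of sin t • v'
    have hsmul : HasDerivAt (fun t => Real.sin t • deriv v t)
        (Real.sin θ • A + Real.cos θ • V) θ := (Real.hasDerivAt_sin θ).smul hv'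
    have hD : deriv (fun t => Real.sin t • deriv v t) θ = Real.sin θ • A + Real.cos θ • V :=
      hsmul.deriv
    -- inner ℝ product of ODE with V
    have heq := hode θ hθ
    rw [hD] at heq
    have hinner := congrArg (fun x : EuclideanSpace ℝ (Fin 3) => (inner ℝ x V : ℝ)) heq
    simp only [inner_add_left, inner_neg_left, real_inner_smul_left] at hinner
    have hw : (inner ℝ (vec3 (4 * v θ 0) 0 (v θ 2)) V : ℝ) = 4 * v θ 0 * V 0 + v θ 2 * V 2 := by
      simp [vec3, PiLp.inner_apply, Fin.sum_univ_three, RCLike.inner_apply]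
      ring
    rw [hw, horth, real_inner_self_eq_norm_sq] at hinner
    -- coordinate derivatives
    have hc0 : HasDerivAt (fun t => v t 0) (V 0) θ := by
      have := (EuclideanSpace.proj (0 : Fin 3) : EuclideanSpace ℝ (Fin 3) →L[ℝ] ℝ)
        |>.hasFDerivAt.comp_hasDerivAt θ hv
      exact this
    have hc2 : HasDerivAt (fun t => v t 2) (V 2) θ := by
      have := (EuclideanSpace.proj (2 : Fin 3) : EuclideanSpace ℝ (Fin 3) →L[ℝ] ℝ)
        |>.hasFDerivAt.comp_hasDerivAt θ hv
      exact this
    -- derivative of the norm squared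
    have hfun : (fun t => (inner ℝ (deriv v t) (deriv v t) : ℝ)) = fun t => ‖deriv v t‖ ^ 2 :=
      funext fun t => real_inner_self_eq_norm_sq _
    have hnorm : HasDerivAt (fun t => ‖deriv v t‖ ^ 2) (inner ℝ V A + inner ℝ A V) θ :=
      hfun ▸ (hv'.inner ℝ hv')
    have hsin2 : HasDerivAt (fun t => Real.sin t ^ 2)
        (2 * Real.sin θ ^ 1 * Real.cos θ) θ := (Real.hasDerivAt_sin θ).pow 2
    have hF := (hnorm.mul hsin2).sub (((hc0.pow 2).const_mul 4).add (hc2.pow 2))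
    have hF0 : HasDerivAt f 0 θ := by
      refine hF.congr_deriv (Eq.symm ?_)
      have hcomm : (inner ℝ V A : ℝ) = inner ℝ A V := real_inner_comm A V
      rw [mul_zero] at hinner
      have h2 : Real.sin θ * (Real.sin θ * (inner ℝ A V : ℝ) + Real.cos θ * ‖V‖ ^ 2) =
          4 * v θ 0 * V 0 + v θ 2 * V 2 := by
        have h3 : (Real.sin θ)⁻¹ * (4 * v θ 0 * V 0 + v θ 2 * V 2) =
            Real.sin θ * (inner ℝ A V : ℝ) + Real.cos θ * ‖V‖ ^ 2 := by linarith
        rw [← h3, ← mul_assoc, mul_inv_cancel₀ hsin, one_mul]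
      rw [← hV, hcomm]
      push_cast
      linear_combination (-2 : ℝ) * h2
    exact hF0
  have hquarter : π / 4 ∈ s := ⟨by positivity, by linarith [pi_pos]⟩
  refine ⟨f (π / 4), fun θ hθ => ?_⟩
  have hdiff : DifferentiableOn ℝ f s := fun x hx =>
    (key x hx).differentiableAt.differentiableWithinAt
  have hz : ∀ x ∈ s, fderivWithin ℝ f s x = 0 := by
    intro x hx
    have h0 : HasFDerivAt f (0 : ℝ →L[ℝ] ℝ) x := by
      have := (key x hx)
      rw [hasDerivAt_iff_hasFDerivAt] at this
      simpa using this
    exact h0.hasFDerivWithinAt.fderivWithin (hopen.uniqueDiffOn x hx)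
  exact (convex_Ioo 0 (π / 2)).is_const_of_fderivWithin_eq_zero hdiff hz hθ hquarter
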